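/- arXiv:1001.0619 — 2 statements merged into one kernel-verified Lean document; each statement's English description precedes it below -/
import Mathlib

section
/- (First cohomology identity from the proof of Corollary 4.4: H^⋆(G(b, a+b−1) × ℙ^{a+b}) ⊕ H^⋆(G(a, a+b−1)) ≅ H^⋆(G(b, a+b) × ℙ^a), in its point-count form.) Let F be a finite field with q = |F| elements and let a, b be natural numbers with a ≥ 1 and b ≥ 1. Write Gr_F(k, n) for the number of k-dimensional F-subspaces of F^n, i.e. Nat.card {W : Submodule F (Fin n → F) // Module.finrank F W = k}, and [n]_q := ∑_{i=0}^{n−1} q^i. Then Gr_F(b, a+b−1) · [a+b+1]_q + q^a · Gr_F(a, a+b−1) = Gr_F(b, a+b) · [a+1]_q. -/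
open Finset

section CountLemmas

open Module Submodule

variable {F : Type*} [Field F] [Fintype F]

private lemma fiber_equiv_aux (n k : ℕ) (W : Submodule F (Fin n → F))
    (hW : Module.finrank F W = k) :
    Nat.card {p : {v : Fin k → (Fin n → F) // LinearIndependent F v} //
        Submodule.span F (Set.range (p.1 : Fin k → Fin n → F)) = W} =
      ∏ i ∈ range k, (Fintype.card F ^ k - Fintype.card F ^ i) := by
  classical
  have e : {p : {v : Fin k → (Fin n → F) // LinearIndependent F v} //
        Submodule.span F (Set.range (p.1 : Fin k → Fin n → F)) = W} ≃
      {u : Fin k → W // LinearIndependent F u} :=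
    { toFun := fun p => ⟨fun i => ⟨p.1.1 i, by
        have := subset_span (R := F) (Set.mem_range_self (f := (p.1 : Fin k → Fin n → F)) i)
        rwa [p.2] at this⟩,
        LinearIndependent.of_comp W.subtype (by exact p.1.2)⟩
      invFun := fun u => ⟨⟨fun i => (u.1 i : Fin n → F),
          u.2.map' W.subtype (ker_subtype W)⟩, by
        have h1 : Submodule.span F (Set.range u.1) = ⊤ := by
          apply Submodule.eq_top_of_finrank_eq
          rw [finrank_span_eq_card u.2, Fintype.card_fin, hW]
        have h2 : Set.range (fun i => (u.1 i : Fin n → F)) = W.subtype '' Set.range u.1 := by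
          rw [← Set.range_comp]; rfl
        rw [h2, ← Submodule.map_span, h1, Submodule.map_subtype_top]⟩
      left_inv := fun p => Subtype.ext (Subtype.ext rfl)
      right_inv := fun u => Subtype.ext (funext fun i => Subtype.ext rfl) }
  rw [Nat.card_congr e, card_linearIndependent (by rw [hW]),
    ← Fin.prod_univ_eq_prod_range fun i => Fintype.card F ^ k - Fintype.card F ^ i]
  rw [hW]

private lemma grass_count (n k : ℕ) (hk : k ≤ n) :
    Nat.card {W : Submodule F (Fin n → F) // Module.finrank F W = k} *
        ∏ i ∈ range k, (Fintype.card F ^ k - Fintype.card F ^ i) =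
      ∏ i ∈ range k, (Fintype.card F ^ n - Fintype.card F ^ i) := by
  classical
  have hfin : Finite (Submodule F (Fin n → F)) :=
    Finite.of_injective _ SetLike.coe_injective
  letI : Fintype (Submodule F (Fin n → F)) := Fintype.ofFinite _
  have hfr : Module.finrank F (Fin n → F) = n := by simp
  set f : {v : Fin k → (Fin n → F) // LinearIndependent F v} →
      {W : Submodule F (Fin n → F) // Module.finrank F W = k} :=
    fun v => ⟨Submodule.span F (Set.range v.1), by
      rw [finrank_span_eq_card v.2, Fintype.card_fin]⟩ with hf
  have h1 : Nat.card {v : Fin k → (Fin n → F) // LinearIndependent F v} =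
      ∏ i ∈ range k, (Fintype.card F ^ n - Fintype.card F ^ i) := by
    rw [card_linearIndependent (by rw [hfr]; exact hk), hfr,
      ← Fin.prod_univ_eq_prod_range fun i => Fintype.card F ^ n - Fintype.card F ^ i]
  rw [← h1, Nat.card_congr (Equiv.sigmaFiberEquiv f).symm]
  simp only [Nat.card_eq_fintype_card]
  rw [Fintype.card_sigma]
  have h2 : ∀ W : {W : Submodule F (Fin n → F) // Module.finrank F W = k},
      Fintype.card {p // f p = W} =
        ∏ i ∈ range k, (Fintype.card F ^ k - Fintype.card F ^ i) := by
    intro W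
    rw [← Nat.card_eq_fintype_card]
    have : {p // f p = W} ≃ {p : {v : Fin k → (Fin n → F) // LinearIndependent F v} //
        Submodule.span F (Set.range (p.1 : Fin k → Fin n → F)) = W.1} :=
      Equiv.subtypeEquivRight fun p => by
        constructor
        · intro h; exact congrArg Subtype.val h
        · intro h; exact Subtype.ext h
    rw [Nat.card_congr this, fiber_equiv_aux n k W.1 W.2]
  rw [Finset.sum_congr rfl fun W _ => h2 W, Finset.sum_const, card_univ, smul_eq_mul]

end CountLemmas

private lemma prod_pow_sub_mul {R : Type*} [CommRing R] (x : R) (k m : ℕ) (hk : k ≤ m) :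
    (∏ i ∈ range k, (x ^ m - x ^ i)) * ∏ j ∈ range (m - k), (x ^ (j + 1) - 1) =
      (∏ i ∈ range k, x ^ i) * ∏ j ∈ range m, (x ^ (j + 1) - 1) := by
  induction k with
  | zero => simp
  | succ k ih =>
    have ih' := ih (Nat.le_of_succ_le hk)
    have h2 : x ^ m - x ^ k = x ^ k * (x ^ (m - k) - 1) := by
      rw [mul_sub, mul_one, ← pow_add]
      congr 2
      omega
    have h4 : (∏ j ∈ range (m - k), (x ^ (j + 1) - 1)) =
        (∏ j ∈ range (m - (k + 1)), (x ^ (j + 1) - 1)) * (x ^ (m - k) - 1) := by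
      have h1 : m - k = (m - (k + 1)) + 1 := by omega
      rw [h1, prod_range_succ, ← h1]
    rw [h4] at ih'
    rw [prod_range_succ, prod_range_succ, h2]
    linear_combination x ^ k * ih'

private lemma core_identity (x : ℚ) (hx : x ≠ 1) (a b : ℕ) :
    (x ^ a - 1) * (∑ i ∈ range (a + b + 1), x ^ i) + x ^ a * (x ^ b - 1) =
      (x ^ (a + b) - 1) * (∑ i ∈ range (a + 1), x ^ i) := by
  have hx1 : x - 1 ≠ 0 := sub_ne_zero.mpr hx
  apply mul_right_cancel₀ hx1
  have h1 := geom_sum_mul x (a + b + 1)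
  have h2 := geom_sum_mul x (a + 1)
  rw [add_mul, mul_assoc, mul_assoc, mul_assoc, h1, h2]
  simp only [pow_add]
  ring

/-- Point-count form of
`H^⋆(G(b, a+b−1) × ℙ^{a+b}) ⊕ H^⋆(G(a, a+b−1)) ≅ H^⋆(G(b, a+b) × ℙ^a)`. -/
theorem grassmannian_identity_one
    (F : Type*) [Field F] [Fintype F] (a b : ℕ) (ha : 1 ≤ a) (hb : 1 ≤ b) :
    Nat.card {W : Submodule F (Fin (a + b - 1) → F) // Module.finrank F W = b} *
        (∑ i ∈ Finset.range (a + b + 1), Fintype.card F ^ i) +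
      Fintype.card F ^ a *
        Nat.card {W : Submodule F (Fin (a + b - 1) → F) // Module.finrank F W = a} =
    Nat.card {W : Submodule F (Fin (a + b) → F) // Module.finrank F W = b} *
        (∑ i ∈ Finset.range (a + 1), Fintype.card F ^ i) := by
  obtain ⟨A, rfl⟩ : ∃ A, a = A + 1 := ⟨a - 1, by omega⟩
  obtain ⟨B, rfl⟩ : ∃ B, b = B + 1 := ⟨b - 1, by omega⟩
  rw [show A + 1 + (B + 1) - 1 = A + B + 1 from by omega,
    show A + 1 + (B + 1) = A + B + 2 from by omega]
  simp only [show A + B + 2 + 1 = A + B + 3 from rfl, show A + 1 + 1 = A + 2 from rfl]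
  set q := Fintype.card F with hq_def
  have hq2 : 2 ≤ q := Fintype.one_lt_card
  -- the three counting identities, over ℕ
  have E1 := grass_count (F := F) (A + B + 1) (B + 1) (by omega)
  have E2 := grass_count (F := F) (A + B + 1) (A + 1) (by omega)
  have E3 := grass_count (F := F) (A + B + 2) (B + 1) (by omega)
  set x : ℚ := (q : ℚ) with hx_def
  have hx2 : (2 : ℚ) ≤ x := by rw [hx_def]; exact_mod_cast hq2
  have hx1 : x ≠ 1 := by linarith
  have hcast : ∀ k m : ℕ, k ≤ m →
      ((∏ i ∈ range k, (q ^ m - q ^ i) : ℕ) : ℚ) = ∏ i ∈ range k, (x ^ m - x ^ i) := by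
    intro k m h
    rw [Nat.cast_prod]
    refine Finset.prod_congr rfl fun i hi => ?_
    rw [Nat.cast_sub (Nat.pow_le_pow_right (by omega)
      (le_trans (le_of_lt (mem_range.1 hi)) h))]
    push_cast
    ring
  have E1q := congrArg (fun t : ℕ => (t : ℚ)) E1
  have E2q := congrArg (fun t : ℕ => (t : ℚ)) E2
  have E3q := congrArg (fun t : ℕ => (t : ℚ)) E3
  simp only [Nat.cast_mul] at E1q E2q E3q
  rw [hcast (B + 1) (B + 1) le_rfl, hcast (B + 1) (A + B + 1) (by omega)] at E1q
  rw [hcast (A + 1) (A + 1) le_rfl, hcast (A + 1) (A + B + 1) (by omega)] at E2q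
  rw [hcast (B + 1) (B + 1) le_rfl, hcast (B + 1) (A + B + 2) (by omega)] at E3q
  -- product identities over ℚ
  have F1 := prod_pow_sub_mul x (B + 1) (A + B + 1) (by omega)
  have F2 := prod_pow_sub_mul x (A + 1) (A + B + 1) (by omega)
  have F3 := prod_pow_sub_mul x (B + 1) (A + B + 2) (by omega)
  have F4 := prod_pow_sub_mul x (A + 1) (A + 1) le_rfl
  have F5 := prod_pow_sub_mul x (B + 1) (B + 1) le_rfl
  simp only [show A + B + 1 - (B + 1) = A from by omega,
    show A + B + 1 - (A + 1) = B from by omega,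
    show A + B + 2 - (B + 1) = A + 1 from by omega,
    Nat.sub_self, range_zero, prod_empty, mul_one] at F1 F2 F3 F4 F5
  have core := core_identity x hx1 (A + 1) (B + 1)
  simp only [show A + 1 + (B + 1) + 1 = A + B + 3 from by omega,
    show A + 1 + (B + 1) = A + B + 2 from by omega,
    show A + 1 + 1 = A + 2 from rfl] at core
  -- name the players
  set g1 : ℚ :=
    (Nat.card {W : Submodule F (Fin (A + B + 1) → F) // Module.finrank F W = B + 1} : ℚ)
    with hg1_def
  set g2 : ℚ :=
    (Nat.card {W : Submodule F (Fin (A + B + 1) → F) // Module.finrank F W = A + 1} : ℚ)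
    with hg2_def
  set g3 : ℚ :=
    (Nat.card {W : Submodule F (Fin (A + B + 2) → F) // Module.finrank F W = B + 1} : ℚ)
    with hg3_def
  set P : ℚ := ∏ i ∈ range (A + 1), (x ^ (A + 1) - x ^ i) with hP_def
  set Q : ℚ := ∏ i ∈ range (B + 1), (x ^ (B + 1) - x ^ i) with hQ_def
  set Nb : ℚ := ∏ i ∈ range (B + 1), (x ^ (A + B + 1) - x ^ i)
  set Na : ℚ := ∏ i ∈ range (A + 1), (x ^ (A + B + 1) - x ^ i)
  set Nb' : ℚ := ∏ i ∈ range (B + 1), (x ^ (A + B + 2) - x ^ i)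
  set dA : ℚ := ∏ j ∈ range A, (x ^ (j + 1) - 1) with hdA_def
  set dB : ℚ := ∏ j ∈ range B, (x ^ (j + 1) - 1) with hdB_def
  set dA1 : ℚ := ∏ j ∈ range (A + 1), (x ^ (j + 1) - 1) with hdA1_def
  set dB1 : ℚ := ∏ j ∈ range (B + 1), (x ^ (j + 1) - 1) with hdB1_def
  set dn : ℚ := ∏ j ∈ range (A + B + 1), (x ^ (j + 1) - 1) with hdn_def
  set dn2 : ℚ := ∏ j ∈ range (A + B + 2), (x ^ (j + 1) - 1) with hdn2_def
  set XA : ℚ := ∏ i ∈ range (A + 1), x ^ i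
  set XB : ℚ := ∏ i ∈ range (B + 1), x ^ i
  set S1 : ℚ := ∑ i ∈ range (A + B + 3), x ^ i with hS1_def
  set S2 : ℚ := ∑ i ∈ range (A + 2), x ^ i with hS2_def
  -- expansion identities
  have G1 : dA1 = dA * (x ^ (A + 1) - 1) := by
    rw [hdA1_def, hdA_def, prod_range_succ]
  have G2 : dB1 = dB * (x ^ (B + 1) - 1) := by
    rw [hdB1_def, hdB_def, prod_range_succ]
  have G3 : dn2 = dn * (x ^ (A + B + 2) - 1) := by
    rw [hdn2_def, hdn_def, prod_range_succ]
  -- combined identities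
  have K1 : g1 * (Q * dA) = XB * dn := by
    rw [← mul_assoc, E1q]; exact F1
  have K2 : g2 * (P * dB) = XA * dn := by
    rw [← mul_assoc, E2q]; exact F2
  have K3 : g3 * (Q * dA1) = XB * dn2 := by
    rw [← mul_assoc, E3q]; exact F3
  -- positivity
  have hxpos : (0 : ℚ) < x := by linarith
  have hdApos : (0 : ℚ) < dA := by
    rw [hdA_def]
    refine Finset.prod_pos fun j _ => ?_
    have : (1 : ℚ) < x ^ (j + 1) := one_lt_pow₀ (by linarith) (Nat.succ_ne_zero j)
    linarith
  have hdBpos : (0 : ℚ) < dB := by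
    rw [hdB_def]
    refine Finset.prod_pos fun j _ => ?_
    have : (1 : ℚ) < x ^ (j + 1) := one_lt_pow₀ (by linarith) (Nat.succ_ne_zero j)
    linarith
  have hPpos : (0 : ℚ) < P := by
    rw [hP_def]
    refine Finset.prod_pos fun i hi => ?_
    have : x ^ i < x ^ (A + 1) := pow_lt_pow_right₀ (by linarith) (mem_range.1 hi)
    linarith
  have hQpos : (0 : ℚ) < Q := by
    rw [hQ_def]
    refine Finset.prod_pos fun i hi => ?_
    have : x ^ i < x ^ (B + 1) := pow_lt_pow_right₀ (by linarith) (mem_range.1 hi)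
    linarith
  have hu1 : (0 : ℚ) < x ^ (A + 1) - 1 := by
    have : (1 : ℚ) < x ^ (A + 1) := one_lt_pow₀ (by linarith) (by omega)
    linarith
  have hM : P * Q * dA * dB * (x ^ (A + 1) - 1) ≠ 0 := by positivity
  have main : g1 * S1 + x ^ (A + 1) * g2 = g3 * S2 := by
    refine mul_right_cancel₀ hM ?_
    calc (g1 * S1 + x ^ (A + 1) * g2) * (P * Q * dA * dB * (x ^ (A + 1) - 1))
        = S1 * P * dB * (x ^ (A + 1) - 1) * (g1 * (Q * dA)) +
          x ^ (A + 1) * Q * dA * (x ^ (A + 1) - 1) * (g2 * (P * dB)) := by ring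
      _ = S1 * P * dB * (x ^ (A + 1) - 1) * (XB * dn) +
          x ^ (A + 1) * Q * dA * (x ^ (A + 1) - 1) * (XA * dn) := by rw [K1, K2]
      _ = XA * XB * dn * dA * dB * (x ^ (A + 1) - 1) *
          ((x ^ (A + 1) - 1) * S1 + x ^ (A + 1) * (x ^ (B + 1) - 1)) := by
          rw [F4, F5, G1, G2]; ring
      _ = XA * XB * dn * dA * dB * (x ^ (A + 1) - 1) *
          ((x ^ (A + B + 2) - 1) * S2) := by rw [core]
      _ = S2 * P * dB * (XB * dn2) := by rw [F4, G1, G3]; ring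
      _ = S2 * P * dB * (g3 * (Q * dA1)) := by rw [K3]
      _ = g3 * S2 * (P * Q * dA * dB * (x ^ (A + 1) - 1)) := by rw [G1]; ring
  rw [hg1_def, hg2_def, hg3_def, hS1_def, hS2_def, hx_def] at main
  exact_mod_cast main
end

section
/- (Nil affine Hecke computation from the proof of Theorem 6.2.) Let 𝒞 be a preadditive monoidal category whose tensor product is bilinear on morphisms. Let E and F be objects, and let x : E ⟶ E, x′ : F ⟶ F, τ : E ⊗ E ⟶ E ⊗ E, t : E ⊗ F ⟶ F ⊗ E and t′ : F ⊗ E ⟶ E ⊗ F be morphisms satisfying: (a) τ ∘ τ = 0; (b) τ ∘ (x ⊗ id_E) = id_{E⊗E} + (id_E ⊗ x) ∘ τ; and (c) t ∘ t′ = x′ ⊗ id_E + id_F ⊗ x as endomorphisms of F ⊗ E. Then, as endomorphisms of F ⊗ (E ⊗ E), (id_F ⊗ τ) ∘ α ∘ ((t ∘ t′) ⊗ id_E) ∘ α⁻¹ ∘ (id_F ⊗ τ) = id_F ⊗ τ, where α : (F ⊗ E) ⊗ E ≅ F ⊗ (E ⊗ E) is the associator. Equivalently, (I τ) ∘ (t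 I) ∘ (t′ I) ∘ (I τ) = I τ. -/
open CategoryTheory CategoryTheory.MonoidalCategory

/-- Nil affine Hecke computation from the proof of Theorem 6.2:
`(I τ) ∘ (t I) ∘ (t′ I) ∘ (I τ) = I τ`. -/
theorem nil_affine_hecke_computation
    (𝒞 : Type*) [Category 𝒞] [MonoidalCategory 𝒞] [Preadditive 𝒞]
    [MonoidalPreadditive 𝒞]
    (E F : 𝒞) (x : E ⟶ E) (x' : F ⟶ F)
    (τ : E ⊗ E ⟶ E ⊗ E) (t : E ⊗ F ⟶ F ⊗ E) (t' : F ⊗ E ⟶ E ⊗ F)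
    (ha : τ ≫ τ = 0)
    (hb : (x ⊗ₘ 𝟙 E) ≫ τ = 𝟙 (E ⊗ E) + τ ≫ (𝟙 E ⊗ₘ x))
    (hc : t' ≫ t = (x' ⊗ₘ 𝟙 E) + (𝟙 F ⊗ₘ x)) :
    (𝟙 F ⊗ₘ τ) ≫ (α_ F E E).inv ≫ ((t' ≫ t) ⊗ₘ 𝟙 E) ≫ (α_ F E E).hom ≫ (𝟙 F ⊗ₘ τ) =
      (𝟙 F ⊗ₘ τ) := by
  have key : τ ≫ (x ⊗ₘ 𝟙 E) ≫ τ = τ := by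
    rw [hb, Preadditive.comp_add, Category.comp_id, ← Category.assoc, ha, Limits.zero_comp,
      add_zero]
  have e1 : (𝟙 F ⊗ₘ τ) ≫ (x' ⊗ₘ 𝟙 (E ⊗ E)) ≫ (𝟙 F ⊗ₘ τ) = 0 := by
    rw [tensorHom_comp_tensorHom_assoc, Category.comp_id, Category.id_comp, tensorHom_comp_tensorHom,
      Category.comp_id, ha]
    simp
  have e2 : (𝟙 F ⊗ₘ τ) ≫ (𝟙 F ⊗ₘ (x ⊗ₘ 𝟙 E)) ≫ (𝟙 F ⊗ₘ τ) = 𝟙 F ⊗ₘ τ := by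
    rw [tensorHom_comp_tensorHom_assoc, tensorHom_comp_tensorHom, Category.comp_id, Category.assoc, key]
    simp
  rw [hc, MonoidalPreadditive.add_tensor]
  simp only [Preadditive.add_comp, Preadditive.comp_add, Category.assoc,
    associator_naturality_assoc, Iso.inv_hom_id_assoc, id_tensorHom_id]
  rw [e1, e2, zero_add]
end
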